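/- Let (X, τ) be a T0 topological space and τ^s the strong (Skula) topology of τ. Then (X, τ^s) is compact if and only if (X, τ) is both a Noetherian space and a well-filtered space. -/

import Mathlib

/-- A subset of a topological space is *saturated* if it equals the intersection of all
open sets containing it. -/
def IsSaturatedSet {Y : Type*} [TopologicalSpace Y] (A : Set Y) : Prop :=
  A = ⋂₀ {U : Set Y | IsOpen U ∧ A ⊆ U}

/-- A space is a *strong R-space* if for every family `𝒦` of compact saturated sets and
every open `U` with `⋂₀ 𝒦 ⊆ U`, some finite subfamily `ℱ ⊆ 𝒦` satisfies `⋂₀ ℱ ⊆ U`. -/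
def IsStrongRSpace (Y : Type*) [TopologicalSpace Y] : Prop :=
  ∀ 𝒦 : Set (Set Y), (∀ K ∈ 𝒦, IsCompact K ∧ IsSaturatedSet K) →
    ∀ U : Set Y, IsOpen U → ⋂₀ 𝒦 ⊆ U → ∃ ℱ ⊆ 𝒦, ℱ.Finite ∧ ⋂₀ ℱ ⊆ U

/-- A space is *coherent* if the intersection of any two compact saturated sets is compact. -/
def IsCoherentSpace (Y : Type*) [TopologicalSpace Y] : Prop :=
  ∀ K₁ K₂ : Set Y, IsCompact K₁ → IsSaturatedSet K₁ → IsCompact K₂ → IsSaturatedSet K₂ →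
    IsCompact (K₁ ∩ K₂)

/-- A space is *well-filtered* if for every (nonempty) filtered family `𝒞` of compact
saturated sets and every open `U` with `⋂₀ 𝒞 ⊆ U`, there exists `K ∈ 𝒞` with `K ⊆ U`. -/
def IsWellFilteredSpace (Y : Type*) [TopologicalSpace Y] : Prop :=
  ∀ 𝒞 : Set (Set Y), 𝒞.Nonempty → (∀ K ∈ 𝒞, IsCompact K ∧ IsSaturatedSet K) →
    (∀ A ∈ 𝒞, ∀ B ∈ 𝒞, ∃ C ∈ 𝒞, C ⊆ A ∩ B) →
    ∀ U : Set Y, IsOpen U → ⋂₀ 𝒞 ⊆ U → ∃ K ∈ 𝒞, K ⊆ U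

/-- Upper closure of a set with respect to the specialization order
(`a ≤ y` iff `a ∈ closure {y}`). -/
def specUpperClosure {Y : Type*} [TopologicalSpace Y] (A : Set Y) : Set Y :=
  {y | ∃ a ∈ A, a ∈ closure {y}}

/-- A space is an *R-space* if whenever an intersection of upper closures of finite sets
is contained in an open set `U`, a finite subintersection is already contained in `U`. -/
def IsRSpace (Y : Type*) [TopologicalSpace Y] : Prop :=
  ∀ (ι : Type*) (F : ι → Set Y), (∀ i, (F i).Finite) → ∀ U : Set Y, IsOpen U →
    (⋂ i, specUpperClosure (F i)) ⊆ U →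
    ∃ A : Set ι, A.Finite ∧ (⋂ i ∈ A, specUpperClosure (F i)) ⊆ U

/-- The Smyth powerspace: the set of nonempty compact saturated subsets. -/
def SmythPow (Y : Type*) [TopologicalSpace Y] : Type _ :=
  {K : Set Y // K.Nonempty ∧ IsCompact K ∧ IsSaturatedSet K}

/-- The topology of the Smyth powerspace, generated by `□U = {K | K ⊆ U}` for `U` open. -/
instance SmythPow.instTopologicalSpace {Y : Type*} [TopologicalSpace Y] :
    TopologicalSpace (SmythPow Y) :=
  TopologicalSpace.generateFrom
    {S | ∃ U : Set Y, IsOpen U ∧ S = {K : SmythPow Y | K.1 ⊆ U}}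

/-- A space is *co-Noetherian* if every closed set is the closure of a finite set. -/
def IsCoNoetherian (Y : Type*) [TopologicalSpace Y] : Prop :=
  ∀ C : Set Y, IsClosed C → ∃ F : Set Y, F.Finite ∧ C = closure F

/-- The patch topology: generated by the open sets together with complements of
compact saturated sets. -/
def patchTop (Y : Type*) [TopologicalSpace Y] : TopologicalSpace Y :=
  TopologicalSpace.generateFrom
    ({U : Set Y | IsOpen U} ∪ {S : Set Y | ∃ K : Set Y, IsCompact K ∧ IsSaturatedSet K ∧ S = Kᶜ})

/-- The strong (Skula) topology: generated by the open sets together with the closed sets. -/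
def skulaTop (Y : Type*) [TopologicalSpace Y] : TopologicalSpace Y :=
  TopologicalSpace.generateFrom ({U : Set Y | IsOpen U} ∪ {C : Set Y | IsClosed C})

/-- A space is *locally hypercompact* if every point has, inside each open neighbourhood `U`,
a finite set `F ⊆ U` with the point in the interior of the upper closure of `F`. -/
def IsLocallyHypercompact (Y : Type*) [TopologicalSpace Y] : Prop :=
  ∀ x : Y, ∀ U : Set Y, IsOpen U → x ∈ U →
    ∃ F : Set Y, F.Finite ∧ F ⊆ U ∧ x ∈ interior (specUpperClosure F)

/-- `U ≪ V` for open sets: every open cover of `V` has a finite subfamily covering `U`. -/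
def wayBelowOpen {Y : Type*} [TopologicalSpace Y] (U V : Set Y) : Prop :=
  ∀ 𝒞 : Set (Set Y), (∀ W ∈ 𝒞, IsOpen W) → V ⊆ ⋃₀ 𝒞 → ∃ 𝒟 ⊆ 𝒞, 𝒟.Finite ∧ U ⊆ ⋃₀ 𝒟

/-- A space is *open well-filtered* if for every (nonempty) `≪`-filtered family `ℱ` of open
sets and every open `U` with `⋂₀ ℱ ⊆ U`, there is `V ∈ ℱ` with `V ⊆ U`. -/
def IsOpenWellFiltered (Y : Type*) [TopologicalSpace Y] : Prop :=
  ∀ ℱ : Set (Set Y), ℱ.Nonempty → (∀ W ∈ ℱ, IsOpen W) →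
    (∀ U₁ ∈ ℱ, ∀ U₂ ∈ ℱ, ∃ U₃ ∈ ℱ, wayBelowOpen U₃ U₁ ∧ wayBelowOpen U₃ U₂) →
    ∀ U : Set Y, IsOpen U → ⋂₀ ℱ ⊆ U → ∃ V ∈ ℱ, V ⊆ U

/-- Lower closure of a set in a preorder. -/
def lowerCloSet {L : Type*} [Preorder L] (A : Set L) : Set L := {x | ∃ a ∈ A, x ≤ a}

/-- `F` is a *cover* of the antichain `C`: `F` is a finite antichain with `C ⊆ ↓F`, and
for every finite `G` with `C ⊆ ↓G` one has `F ⊆ ↓G`. -/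
def IsCoverOf {L : Type*} [Preorder L] (F C : Set L) : Prop :=
  F.Finite ∧ IsAntichain (· ≤ ·) F ∧ C ⊆ lowerCloSet F ∧
    ∀ G : Set L, G.Finite → C ⊆ lowerCloSet G → F ⊆ lowerCloSet G

/-- Specialization order: `x ≤ y` iff `x ∈ closure {y}`. -/
def specLE {Y : Type*} [TopologicalSpace Y] (x y : Y) : Prop := x ∈ closure {y}

/-- Lower closure with respect to the specialization order. -/
def specLowerClosure {Y : Type*} [TopologicalSpace Y] (A : Set Y) : Set Y :=
  {x | ∃ a ∈ A, specLE x a}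

/-!
A closed set is Skula-open, so in a Skula-compact space every open set is compact, and a filtered
family of compact saturated sets (which are Skula-closed) with `⋂ 𝒞 ⊆ U` has a member inside `U`
by the finite intersection property applied to the sets `K \ U`.

Conversely, in a Noetherian well-filtered space the open sets meeting an irreducible closed set `A`
form a filtered family of compact saturated sets, and any point of `A` in their intersection is a
generic point of `A`. So the space is sober, hence every closed set is the closure of finitely
many points. By Alexander's subbasis theorem it suffices to refine a cover by open and closed sets:
finitely many of the open members cover their (compact) union, and the closed remainder
`closure F` is covered by the closed members containing the finitely many points of `F`.
-/

open Set TopologicalSpace Topology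

section

variable {X : Type*} [TopologicalSpace X]

lemma skulaTop_le : skulaTop X ≤ ‹TopologicalSpace X› :=
  fun _ hU => isOpen_generateFrom_of_mem (Or.inl hU)

lemma isOpen_skulaTop_of_isClosed {C : Set X} (hC : IsClosed C) : IsOpen[skulaTop X] C :=
  isOpen_generateFrom_of_mem (Or.inr hC)

lemma isClosed_skulaTop_of_isOpen {U : Set X} (hU : IsOpen U) : IsClosed[skulaTop X] U :=
  @IsClosed.mk X (skulaTop X) U (isOpen_skulaTop_of_isClosed hU.isClosed_compl)

lemma isClosed_skulaTop_of_isClosed {C : Set X} (hC : IsClosed C) : IsClosed[skulaTop X] C :=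
  @IsClosed.mk X (skulaTop X) C (skulaTop_le _ hC.isOpen_compl)

lemma IsSaturatedSet.of_isOpen {U : Set X} (hU : IsOpen U) : IsSaturatedSet U :=
  subset_antisymm (fun _ hx _ hV => hV.2 hx) (sInter_subset_of_mem ⟨hU, subset_rfl⟩)

lemma IsSaturatedSet.isClosed_skulaTop {K : Set X} (hK : IsSaturatedSet K) :
    IsClosed[skulaTop X] K := by
  rw [hK]
  exact @isClosed_sInter X (skulaTop X) _ fun U hU => isClosed_skulaTop_of_isOpen hU.1

lemma IsCompact.of_skulaTop {s : Set X} (hs : @IsCompact X (skulaTop X) s) : IsCompact s := by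
  simpa using @IsCompact.image X X (skulaTop X) _ s id hs (continuous_id_of_le skulaTop_le)

lemma noetherianSpace_of_compactSpace_skulaTop [@CompactSpace X (skulaTop X)] :
    NoetherianSpace X :=
  (noetherianSpace_iff_opens X).2 fun U =>
    IsCompact.of_skulaTop <| @IsClosed.isCompact X (skulaTop X) _ _
      (isClosed_skulaTop_of_isOpen U.isOpen)

lemma isWellFilteredSpace_of_compactSpace_skulaTop [@CompactSpace X (skulaTop X)] :
    IsWellFilteredSpace X := by
  intro 𝒞 hne hcs hfil U hU hsub
  have : Nonempty 𝒞 := hne.to_subtype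
  have hdir : Directed (· ⊇ ·) fun K : 𝒞 => K.1 ∩ Uᶜ := by
    rintro ⟨A, hA⟩ ⟨B, hB⟩
    obtain ⟨C, hC, hCAB⟩ := hfil A hA B hB
    exact ⟨⟨C, hC⟩, inter_subset_inter_left _ (hCAB.trans inter_subset_left),
      inter_subset_inter_left _ (hCAB.trans inter_subset_right)⟩
  have hempty : (univ ∩ ⋂ K : 𝒞, K.1 ∩ Uᶜ) = ∅ := by
    rw [univ_inter, ← iInter_inter, ← sInter_eq_iInter, ← sdiff_eq, sdiff_eq_empty]
    exact hsub
  obtain ⟨⟨K, hK⟩, hKU⟩ := @IsCompact.elim_directed_family_closed X (skulaTop X) _ _ _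
    (@isCompact_univ X (skulaTop X) _) _
    (fun K : 𝒞 => @IsClosed.inter X _ _ (skulaTop X) (hcs K.1 K.2).2.isClosed_skulaTop
      (isClosed_skulaTop_of_isClosed hU.isClosed_compl))
    hempty hdir
  rw [univ_inter, ← sdiff_eq, sdiff_eq_empty] at hKU
  exact ⟨K, hK, hKU⟩

lemma quasiSober_of_isWellFilteredSpace [NoetherianSpace X] (hWF : IsWellFilteredSpace X) :
    QuasiSober X := by
  refine ⟨fun {A} hirr hA => ?_⟩
  let 𝒞 : Set (Set X) := {U | IsOpen U ∧ (A ∩ U).Nonempty}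
  have hfil : ∀ U ∈ 𝒞, ∀ V ∈ 𝒞, ∃ W ∈ 𝒞, W ⊆ U ∩ V := fun U hU V hV =>
    ⟨U ∩ V, ⟨hU.1.inter hV.1, hirr.2 U V hU.1 hV.1 hU.2 hV.2⟩, subset_rfl⟩
  obtain ⟨x, hx𝒞, hxA⟩ : ∃ x ∈ ⋂₀ 𝒞, x ∈ A := by
    by_contra! h
    obtain ⟨U, hU, hUA⟩ := hWF 𝒞 ⟨univ, isOpen_univ, by simpa using hirr.1⟩
      (fun U hU => ⟨NoetherianSpace.isCompact U, .of_isOpen hU.1⟩) hfil Aᶜ hA.isOpen_compl h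
    obtain ⟨y, hyA, hyU⟩ := hU.2
    exact hUA hyU hyA
  refine ⟨x, (isGenericPoint_iff_forall_closed hA hxA).2 fun Z hZ hxZ a haA => ?_⟩
  by_contra haZ
  exact hx𝒞 Zᶜ ⟨hZ.isOpen_compl, a, haA, haZ⟩ hxZ

lemma isCoNoetherian_of_quasiSober [NoetherianSpace X] [QuasiSober X] : IsCoNoetherian X := by
  intro C hC
  obtain ⟨S, hSfin, hSclosed, hSirr, rfl⟩ := NoetherianSpace.exists_finite_set_isClosed_irreducible hC
  cases isEmpty_or_nonempty X
  · exact ⟨∅, finite_empty, Subsingleton.elim _ _⟩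
  choose! g hg using fun s (hs : s ∈ S) => QuasiSober.sober (hSirr s hs) (hSclosed s hs)
  refine ⟨g '' S, hSfin.image g, subset_antisymm ?_ ?_⟩
  · refine sUnion_subset fun s hs => ?_
    rw [← (hg s hs).def]
    exact closure_mono (singleton_subset_iff.2 (mem_image_of_mem g hs))
  · refine closure_minimal (image_subset_iff.2 fun s hs => ?_) hC
    exact subset_sUnion_of_mem hs ((hg s hs).mem)

lemma IsCoNoetherian.exists_finite_subcover_closed (h : IsCoNoetherian X) {C : Set X}
    (hC : IsClosed C) {𝒟 : Set (Set X)} (h𝒟 : ∀ D ∈ 𝒟, IsClosed D) (hcov : C ⊆ ⋃₀ 𝒟) :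
    ∃ 𝒟' ⊆ 𝒟, 𝒟'.Finite ∧ C ⊆ ⋃₀ 𝒟' := by
  obtain ⟨F, hF, rfl⟩ := h C hC
  choose! D hD𝒟 hxD using fun x (hx : x ∈ F) => hcov (subset_closure hx)
  refine ⟨D '' F, image_subset_iff.2 hD𝒟, hF.image D, ?_⟩
  rw [sUnion_image]
  exact closure_minimal (fun x hx => mem_biUnion hx (hxD x hx))
    (hF.isClosed_biUnion fun x hx => h𝒟 _ (hD𝒟 x hx))

lemma compactSpace_skulaTop_of_isCoNoetherian [NoetherianSpace X] (h : IsCoNoetherian X) :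
    @CompactSpace X (skulaTop X) := by
  refine @compactSpace_generateFrom X (skulaTop X) _ rfl fun P hP hcov => ?_
  let 𝒪 : Set (Set X) := {U ∈ P | IsOpen U}
  let 𝒟 : Set (Set X) := {D ∈ P | IsClosed D}
  have h𝒟 : (⋃₀ 𝒪)ᶜ ⊆ ⋃₀ 𝒟 := by
    intro x hx
    obtain ⟨D, hDP, hxD⟩ := mem_sUnion.1 (hcov ▸ mem_univ x)
    rcases hP hDP with hD | hD
    · exact (hx ⟨D, ⟨hDP, hD⟩, hxD⟩).elim
    · exact ⟨D, ⟨hDP, hD⟩, hxD⟩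
  obtain ⟨𝒪', h𝒪'𝒪, h𝒪'fin, h𝒪'⟩ := (NoetherianSpace.isCompact (⋃₀ 𝒪)).elim_finite_subcover_image
    (b := 𝒪) (c := id) (fun U (hU : U ∈ 𝒪) => hU.2) (sUnion_eq_biUnion ▸ subset_rfl)
  obtain ⟨𝒟', h𝒟'𝒟, h𝒟'fin, h𝒟'⟩ := h.exists_finite_subcover_closed
    (isOpen_sUnion fun U (hU : U ∈ 𝒪) => hU.2).isClosed_compl (fun D (hD : D ∈ 𝒟) => hD.2) h𝒟
  refine ⟨𝒪' ∪ 𝒟', union_subset (h𝒪'𝒪.trans (sep_subset _ _)) (h𝒟'𝒟.trans (sep_subset _ _)),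
    h𝒪'fin.union h𝒟'fin, eq_univ_of_forall fun x => ?_⟩
  by_cases hx : x ∈ ⋃₀ 𝒪
  · obtain ⟨U, hU, hxU⟩ := mem_iUnion₂.1 (h𝒪' hx)
    exact ⟨U, Or.inl hU, hxU⟩
  · exact sUnion_mono subset_union_right (h𝒟' hx)

end

theorem stmt14_general {X : Type*} [TopologicalSpace X] :
    @CompactSpace X (skulaTop X) ↔
      ((∀ U : Set X, IsOpen U → IsCompact U) ∧ IsWellFilteredSpace X) := by
  constructor
  · intro _
    have := noetherianSpace_of_compactSpace_skulaTop (X := X)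
    exact ⟨fun U _ => NoetherianSpace.isCompact U, isWellFilteredSpace_of_compactSpace_skulaTop⟩
  · rintro ⟨hN, hWF⟩
    have : NoetherianSpace X := (noetherianSpace_iff_opens X).2 fun U => hN U U.isOpen
    have := quasiSober_of_isWellFilteredSpace hWF
    exact compactSpace_skulaTop_of_isCoNoetherian isCoNoetherian_of_quasiSober

theorem stmt14 {X : Type*} [TopologicalSpace X] [T0Space X] :
    @CompactSpace X (skulaTop X) ↔
      ((∀ U : Set X, IsOpen U → IsCompact U) ∧ IsWellFilteredSpace X) :=
  stmt14_general
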